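/- arXiv:1709.07593 — 3 statements merged into one kernel-verified Lean document; each statement's English description precedes it below -/
import Mathlib

section
/- For a natural number r with α > r, the r-th moment ∫₀^∞ t^r · f(t) dt of the LF distribution equals (1-p)·λ^r·Γ(1 - r/α), where f is the LF density. -/
/-!
The substitution `u = x ^ (-α)` turns `∫₀^∞ x ^ (-(α s) - 1) e^{-x^{-α}} dx` into `Γ(s) / α`.
After rescaling `t = λ x`, the `r`-th moment of the LF density is `(1 - p) λ ^ r` times this
integral with `s = 1 - r / α`, which is where the condition `r < α` enters.
-/

open MeasureTheory Real Set

theorem integral_rpow_mul_exp_neg_rpow_neg {a s : ℝ} (ha : 0 < a) (hs : 0 < s) :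
    ∫ x in Ioi (0 : ℝ), x ^ (-(a * s) - 1) * exp (-x ^ (-a)) = Gamma s / a := by
  have hsubst := integral_comp_rpow_Ioi (fun u => exp (-u) * u ^ (s - 1))
    (neg_ne_zero.mpr ha.ne')
  rw [Gamma_eq_integral hs, ← hsubst, eq_div_iff ha.ne', ← integral_mul_const]
  refine setIntegral_congr_fun measurableSet_Ioi fun x (hx : 0 < x) => ?_
  rw [smul_eq_mul, abs_neg, abs_of_pos ha, ← rpow_mul hx.le,
    show -(a * s) - 1 = (-a - 1) + -a * (s - 1) by ring, rpow_add hx]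
  ring

theorem integral_rpow_mul_frechet_density {lam a q : ℝ} (hlam : 0 < lam) (ha : 0 < a)
    (hq : q < a) :
    ∫ t in Ioi (0 : ℝ),
      t ^ q * ((a / lam) * (t / lam) ^ (-(a + 1)) * exp (-(t / lam) ^ (-a)))
      = lam ^ q * Gamma (1 - q / a) := by
  have hs : 0 < 1 - q / a := by rwa [sub_pos, div_lt_one ha]
  rw [← mul_zero lam, ← integral_comp_mul_left_Ioi' _ 0 hlam, smul_eq_mul]
  have hscaled : ∀ x ∈ Ioi (0 : ℝ),
      (lam * x) ^ q * ((a / lam) * (lam * x / lam) ^ (-(a + 1)) * exp (-(lam * x / lam) ^ (-a)))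
        = (lam ^ q * a / lam) * (x ^ (-(a * (1 - q / a)) - 1) * exp (-x ^ (-a))) := by
    intro x (hx : 0 < x)
    rw [mul_div_cancel_left₀ x hlam.ne', mul_rpow hlam.le hx.le,
      show -(a * (1 - q / a)) - 1 = q + -(a + 1) by field_simp; ring, rpow_add hx]
    ring
  rw [setIntegral_congr_fun measurableSet_Ioi hscaled, integral_const_mul,
    integral_rpow_mul_exp_neg_rpow_neg ha hs]
  field_simp

theorem lf_moments_general
    (lam alpha p : ℝ) (r : ℕ) (hlam : 0 < lam) (halpha : 0 < alpha)
    (hr : (r : ℝ) < alpha) :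
    ∫ t in Set.Ioi (0 : ℝ),
      t ^ r * ((alpha * (1 - p) / lam) * (t / lam) ^ (-(alpha + 1)) *
        Real.exp (-(t / lam) ^ (-alpha)))
      = (1 - p) * lam ^ r * Real.Gamma (1 - r / alpha) := by
  have hfactor : ∀ t : ℝ,
      t ^ r * ((alpha * (1 - p) / lam) * (t / lam) ^ (-(alpha + 1)) *
        exp (-(t / lam) ^ (-alpha)))
      = (1 - p) * (t ^ (r : ℝ) * ((alpha / lam) * (t / lam) ^ (-(alpha + 1)) *
        exp (-(t / lam) ^ (-alpha)))) := by
    intro t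
    rw [rpow_natCast]
    ring
  simp_rw [hfactor, integral_const_mul, integral_rpow_mul_frechet_density hlam halpha hr,
    rpow_natCast, mul_assoc]

theorem lf_moments
    (lam alpha p : ℝ) (r : ℕ) (hlam : 0 < lam) (halpha : 0 < alpha)
    (hp : p ∈ Set.Ioo (0 : ℝ) 1) (hr : (r : ℝ) < alpha) :
    ∫ t in Set.Ioi (0 : ℝ),
      t ^ r * ((alpha * (1 - p) / lam) * (t / lam) ^ (-(alpha + 1)) *
        Real.exp (-(t / lam) ^ (-alpha)))
      = (1 - p) * lam ^ r * Real.Gamma (1 - r / alpha) :=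
  lf_moments_general lam alpha p r hlam halpha hr
end

section
/- The hazard function h(t) = f(t)/S(t) of the LF distribution tends to 0 as t → ∞. -/
/-! As `t → ∞` we have `(t/λ)^{-α} → 0`, so the density `f` tends to `0` while the survival
function `S` tends to the cure fraction `p > 0`; hence `f / S → 0`. -/

open Filter Real Topology

lemma tendsto_div_const_rpow_neg_atTop {lam a : ℝ} (hlam : 0 < lam) (ha : 0 < a) :
    Tendsto (fun t : ℝ => (t / lam) ^ (-a)) atTop (𝓝 0) :=
  (tendsto_rpow_neg_atTop ha).comp (tendsto_id.atTop_div_const hlam)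

lemma tendsto_exp_neg_div_const_rpow_neg_atTop {lam a : ℝ} (hlam : 0 < lam) (ha : 0 < a) :
    Tendsto (fun t : ℝ => exp (-(t / lam) ^ (-a))) atTop (𝓝 1) :=
  tendsto_exp_nhds_zero_nhds_one.comp <| by
    simpa using (tendsto_div_const_rpow_neg_atTop hlam ha).neg

theorem lf_hazard_tendsto_zero_atTop
    (lam alpha p : ℝ) (hlam : 0 < lam) (halpha : 0 < alpha)
    (hp : p ∈ Set.Ioo (0 : ℝ) 1) :
    Tendsto (fun t : ℝ =>
      ((alpha * (1 - p) / lam) * (t / lam) ^ (-(alpha + 1)) *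
        Real.exp (-(t / lam) ^ (-alpha))) /
      (p + (1 - p) * (1 - Real.exp (-(t / lam) ^ (-alpha)))))
      atTop (nhds 0) := by
  have hexp := tendsto_exp_neg_div_const_rpow_neg_atTop hlam halpha
  have hdensity : Tendsto (fun t : ℝ => (alpha * (1 - p) / lam) * (t / lam) ^ (-(alpha + 1)) *
      exp (-(t / lam) ^ (-alpha))) atTop (𝓝 0) := by
    simpa using (tendsto_const_nhds.mul
      (tendsto_div_const_rpow_neg_atTop hlam (by linarith : 0 < alpha + 1))).mul hexp
  have hsurvival : Tendsto (fun t : ℝ => p + (1 - p) * (1 - exp (-(t / lam) ^ (-alpha))))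
      atTop (𝓝 p) := by
    simpa using (tendsto_const_nhds.add (tendsto_const_nhds.mul (tendsto_const_nhds.sub hexp)) :
      Tendsto _ atTop (𝓝 (p + (1 - p) * (1 - 1))))
  simpa only [zero_div, Pi.div_def] using hdensity.div hsurvival hp.1.ne'
end

section
/- The hazard function h(t) = f(t)/S(t) of the LF distribution tends to 0 as t → 0⁺. -/
open Filter Real Topology

/-! Near `0⁺` the substitution `u = (t/λ)^{-α} → ∞` turns the numerator of the hazard into
`u^{(α+1)/α} e^{-u} → 0`, while the survival function tends to `p + (1 - p) = 1`. -/

theorem tendsto_div_const_nhdsGT_zero {𝕜 : Type*} [Field 𝕜] [LinearOrder 𝕜]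
    [IsStrictOrderedRing 𝕜] [TopologicalSpace 𝕜] [OrderTopology 𝕜] {c : 𝕜} (hc : 0 < c) :
    Tendsto (· / c) (𝓝[>] 0) (𝓝[>] 0) := by
  refine tendsto_nhdsWithin_iff.2 ⟨?_, eventually_mem_nhdsWithin.mono fun t ht => div_pos ht hc⟩
  simpa using (tendsto_id.div_const c).mono_left (nhdsWithin_le_nhds (a := (0 : 𝕜)))

theorem tendsto_rpow_mul_exp_neg_rpow_neg_nhdsGT_zero {a : ℝ} (ha : 0 < a) (b : ℝ) :
    Tendsto (fun x : ℝ => x ^ b * exp (-x ^ (-a))) (𝓝[>] 0) (𝓝 0) := by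
  have hu := tendsto_rpow_neg_nhdsGT_zero (neg_lt_zero.2 ha)
  refine ((tendsto_rpow_mul_exp_neg_mul_atTop_nhds_zero (-b / a) 1 one_pos).comp hu).congr' ?_
  filter_upwards [self_mem_nhdsWithin] with x (hx : 0 < x)
  have hpow : (x ^ (-a)) ^ (-b / a) = x ^ b := by
    rw [← rpow_mul hx.le]
    congr 1
    field_simp
  simp [hpow]

theorem lf_hazard_tendsto_zero_at_zero_general
    (lam alpha p : ℝ) (hlam : 0 < lam) (halpha : 0 < alpha) :
    Tendsto (fun t : ℝ =>
      ((alpha * (1 - p) / lam) * (t / lam) ^ (-(alpha + 1)) *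
        Real.exp (-(t / lam) ^ (-alpha))) /
      (p + (1 - p) * (1 - Real.exp (-(t / lam) ^ (-alpha)))))
      (nhdsWithin 0 (Set.Ioi 0)) (nhds 0) := by
  have hscale := tendsto_div_const_nhdsGT_zero hlam
  have hnum : Tendsto (fun t : ℝ => (t / lam) ^ (-(alpha + 1)) * exp (-(t / lam) ^ (-alpha)))
      (𝓝[>] 0) (𝓝 0) :=
    (tendsto_rpow_mul_exp_neg_rpow_neg_nhdsGT_zero halpha _).comp hscale
  have hexp : Tendsto (fun t : ℝ => exp (-(t / lam) ^ (-alpha))) (𝓝[>] 0) (𝓝 0) :=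
    (tendsto_exp_neg_atTop_nhds_zero.comp
      (tendsto_rpow_neg_nhdsGT_zero (neg_lt_zero.2 halpha))).comp hscale
  have hsurv : Tendsto (fun t : ℝ => p + (1 - p) * (1 - exp (-(t / lam) ^ (-alpha))))
      (𝓝[>] 0) (𝓝 1) := by
    convert tendsto_const_nhds.add (tendsto_const_nhds.mul (tendsto_const_nhds.sub hexp)) using 2
    ring
  have hhazard := (hnum.const_mul (alpha * (1 - p) / lam)).div hsurv one_ne_zero
  simpa only [Pi.div_def, mul_assoc, mul_zero, zero_div] using hhazard

theorem lf_hazard_tendsto_zero_at_zero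
    (lam alpha p : ℝ) (hlam : 0 < lam) (halpha : 0 < alpha)
    (hp : p ∈ Set.Ioo (0 : ℝ) 1) :
    Tendsto (fun t : ℝ =>
      ((alpha * (1 - p) / lam) * (t / lam) ^ (-(alpha + 1)) *
        Real.exp (-(t / lam) ^ (-alpha))) /
      (p + (1 - p) * (1 - Real.exp (-(t / lam) ^ (-alpha)))))
      (nhdsWithin 0 (Set.Ioi 0)) (nhds 0) :=
  lf_hazard_tendsto_zero_at_zero_general lam alpha p hlam halpha
end
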